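/- Let Q be an inverse quantal frame, X a Q-sheaf, s and t local sections of X, and u ∈ Q_I a partial unit such that ⟨s,t⟩ = u, ς_X(s) = ς_Q(u) and ς_X(t) = ς_Q(u*). Then s and t are principal sections, and both s = ut and t = u*s hold. -/

import Mathlib

/-- A unital involutive quantale: a complete lattice with an associative
multiplication preserving arbitrary joins in each variable, a unit `e`, and a
join-preserving involution. -/
structure Quantale' (Q : Type*) [CompleteLattice Q] where
  mul : Q → Q → Q
  e : Q
  star : Q → Q
  mul_assoc : ∀ a b c, mul (mul a b) c = mul a (mul b c)
  sSup_mul : ∀ (S : Set Q) (b : Q), mul (sSup S) b = ⨆ a ∈ S, mul a b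
  mul_sSup : ∀ (a : Q) (S : Set Q), mul a (sSup S) = ⨆ b ∈ S, mul a b
  e_mul : ∀ a, mul e a = a
  mul_e : ∀ a, mul a e = a
  star_star : ∀ a, star (star a) = a
  star_mul : ∀ a b, star (mul a b) = mul (star b) (star a)
  star_sSup : ∀ S : Set Q, star (sSup S) = ⨆ a ∈ S, star a

/-- The set of partial units of a quantale. -/
def Quantale'.PU {Q : Type*} [CompleteLattice Q] (Qs : Quantale' Q) : Set Q :=
  {s | Qs.mul s (Qs.star s) ≤ Qs.e ∧ Qs.mul (Qs.star s) s ≤ Qs.e}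

/-- An inverse quantal frame: a unital involutive quantale which is a frame,
has a stable support, and whose partial units join to the top. -/
structure InverseQuantalFrame (Q : Type*) [Order.Frame Q] extends toQuantale : Quantale' Q where
  supp : Q → Q
  supp_le_e : ∀ a, supp a ≤ e
  supp_sSup : ∀ S : Set Q, supp (sSup S) = ⨆ a ∈ S, supp a
  supp_le_mul_star : ∀ a, supp a ≤ mul a (star a)
  le_supp_mul : ∀ a, a ≤ mul (supp a) a
  supp_stable : ∀ b a, b ≤ e → supp (mul b a) = mul b (supp a)
  sSup_PU : sSup {s | mul s (star s) ≤ e ∧ mul (star s) s ≤ e} = ⊤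

/-- A left module over a quantale: a complete lattice with a unital associative
action preserving arbitrary joins in each variable. -/
structure QuantaleModule {Q : Type*} [CompleteLattice Q] (Qs : Quantale' Q)
    (X : Type*) [CompleteLattice X] where
  act : Q → X → X
  act_mul : ∀ a b x, act (Qs.mul a b) x = act a (act b x)
  act_e : ∀ x, act Qs.e x = x
  sSup_act : ∀ (S : Set Q) (x : X), act (sSup S) x = ⨆ a ∈ S, act a x
  act_sSup : ∀ (a : Q) (S : Set X), act a (sSup S) = ⨆ x ∈ S, act a x

/-- A pre-Hilbert module over a quantale. -/
structure PreHilbertModule {Q : Type*} [CompleteLattice Q] (Qs : Quantale' Q)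
    (X : Type*) [CompleteLattice X] extends QuantaleModule Qs X where
  inner : X → X → Q
  inner_act : ∀ a x y, inner (act a x) y = Qs.mul a (inner x y)
  sSup_inner : ∀ (S : Set X) (y : X), inner (sSup S) y = ⨆ x ∈ S, inner x y
  inner_star : ∀ x y, inner x y = Qs.star (inner y x)

namespace PreHilbertModule

variable {Q X : Type*} [CompleteLattice Q] [CompleteLattice X] {Qs : Quantale' Q}

/-- A Hilbert section: `⟨x,s⟩s ≤ x` for all `x`. -/
def IsHilbertSection (H : PreHilbertModule Qs X) (s : X) : Prop :=
  ∀ x, H.act (H.inner x s) s ≤ x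

/-- A regular element: `⟨s,s⟩s = s`. -/
def IsRegularSection (H : PreHilbertModule Qs X) (s : X) : Prop :=
  H.act (H.inner s s) s = s

/-- A Hilbert basis: `x = ⋁_{t ∈ S} ⟨x,t⟩t` for all `x`. -/
def IsHilbertBasis (H : PreHilbertModule Qs X) (S : Set X) : Prop :=
  ∀ x, x = ⨆ t ∈ S, H.act (H.inner x t) t

/-- Non-degeneracy of the inner product. -/
def Nondegenerate (H : PreHilbertModule Qs X) : Prop :=
  ∀ x y, (∀ z, H.inner x z = H.inner y z) → x = y

end PreHilbertModule

/-- A `Q`-locale over an inverse quantal frame: a module which is a frame and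
satisfies the anchor condition. -/
structure QLocale {Q : Type*} [Order.Frame Q] (Qf : InverseQuantalFrame Q)
    (X : Type*) [Order.Frame X] extends QuantaleModule Qf.toQuantale X where
  anchor : ∀ b x, b ≤ Qf.e → act b x = act b ⊤ ⊓ x

/-- A `Q`-sheaf over an inverse quantal frame: a pre-Hilbert module which is a
frame, satisfies the anchor condition, and has a Hilbert basis. -/
structure QSheaf {Q : Type*} [Order.Frame Q] (Qf : InverseQuantalFrame Q)
    (X : Type*) [Order.Frame X] extends PreHilbertModule Qf.toQuantale X where
  anchor : ∀ b x, b ≤ Qf.e → act b x = act b ⊤ ⊓ x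
  hasBasis : ∃ S : Set X, ∀ x, x = ⨆ t ∈ S, act (inner x t) t

namespace QSheaf

variable {Q X : Type*} [Order.Frame Q] [Order.Frame X] {Qf : InverseQuantalFrame Q}

/-- The support `ς_X(x) = ⟨x,x⟩ ∧ e` of a `Q`-sheaf. -/
def sppX (H : QSheaf Qf X) (x : X) : Q := H.inner x x ⊓ Qf.e

/-- A local section: `ς_X(x)s = x` for all `x ≤ s`. -/
def IsLocalSection (H : QSheaf Qf X) (s : X) : Prop :=
  ∀ x ≤ s, H.act (H.sppX x) s = x

/-- A principal section: a local section with `⟨s,s⟩ ≤ e`. -/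
def IsPrincipalSection (H : QSheaf Qf X) (s : X) : Prop :=
  H.IsLocalSection s ∧ H.inner s s ≤ Qf.e

/-- A right local section: `x = s ∧ 1_Q·x` for all `x ≤ s`. -/
def IsRightLocalSection (H : QSheaf Qf X) (s : X) : Prop :=
  ∀ x ≤ s, x = s ⊓ H.act ⊤ x

/-- A local bisection: simultaneously a local section and a right local section. -/
def IsBisection (H : QSheaf Qf X) (s : X) : Prop :=
  H.IsLocalSection s ∧ H.IsRightLocalSection s

end QSheaf

/-!
Every local section `t` of a `Q`-sheaf is a Hilbert section, `⟨x,t⟩t ≤ x`. Against a Hilbert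
section `w` (a basis element, say) this is checked one partial unit `v ≤ ⟨w,t⟩` at a time:
`v*w ≤ t`, and `v*v ≤ ς_X(v*w)` because `vv* = ς_Q(v) ≤ ς_Q⟨w,t⟩ ≤ ⟨w,w⟩`, so locality of `t`
gives `v*v t ≤ v*w` and hence `vt = vv*v t ≤ w`. This suffices, since every element of `Q` is
the join of the partial units below it and `x` is a join of multiples of basis elements.

With `⟨s,t⟩ = u` this yields `ut ≤ s` and `u*s ≤ t`. Conversely `s = ς_X(s)s = uu*s ≤ ut`,
so `s = ut`, and then `⟨s,s⟩ = u⟨t,s⟩ = uu* ≤ e`; the claims about `t` follow by symmetry.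
-/

def sSupHom.mk' {α β : Type*} [CompleteLattice α] [CompleteLattice β] (f : α → β)
    (hf : ∀ S : Set α, f (sSup S) = ⨆ a ∈ S, f a) : sSupHom α β :=
  ⟨f, fun S => by rw [hf, sSup_image]⟩

namespace Quantale'

variable {Q : Type*} [CompleteLattice Q] (Qs : Quantale' Q)

def mulLeft (a : Q) : sSupHom Q Q := sSupHom.mk' (Qs.mul a) (Qs.mul_sSup a)

def mulRight (b : Q) : sSupHom Q Q := sSupHom.mk' (Qs.mul · b) (Qs.sSup_mul · b)

def starHom : sSupHom Q Q := sSupHom.mk' Qs.star Qs.star_sSup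

variable {Qs}

theorem mul_le_mul {a b c d : Q} (hab : a ≤ b) (hcd : c ≤ d) : Qs.mul a c ≤ Qs.mul b d :=
  (OrderHomClass.mono (Qs.mulRight c) hab).trans (OrderHomClass.mono (Qs.mulLeft b) hcd)

theorem star_le_star {a b : Q} (h : a ≤ b) : Qs.star a ≤ Qs.star b :=
  OrderHomClass.mono Qs.starHom h

theorem mem_PU_of_le {a v : Q} (hv : v ∈ Qs.PU) (h : a ≤ v) : a ∈ Qs.PU :=
  ⟨(mul_le_mul h (star_le_star h)).trans hv.1, (mul_le_mul (star_le_star h) h).trans hv.2⟩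

theorem star_mem_PU {v : Q} (hv : v ∈ Qs.PU) : Qs.star v ∈ Qs.PU := by
  show _ ∧ _
  rw [Qs.star_star]
  exact hv.symm

end Quantale'

namespace InverseQuantalFrame

variable {Q : Type*} [Order.Frame Q] (Qf : InverseQuantalFrame Q)

def suppHom : sSupHom Q Q := sSupHom.mk' Qf.supp Qf.supp_sSup

variable {Qf}

theorem supp_mono {a b : Q} (h : a ≤ b) : Qf.supp a ≤ Qf.supp b :=
  OrderHomClass.mono Qf.suppHom h

theorem supp_mul_le (a b : Q) : Qf.supp (Qf.mul a b) ≤ Qf.supp a :=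
  calc Qf.supp (Qf.mul a b)
      ≤ Qf.supp (Qf.mul (Qf.supp a) (Qf.mul a b)) := by
        rw [← Qf.mul_assoc]
        exact supp_mono (Quantale'.mul_le_mul (Qf.le_supp_mul a) le_rfl)
    _ = Qf.mul (Qf.supp a) (Qf.supp (Qf.mul a b)) := Qf.supp_stable _ _ (Qf.supp_le_e a)
    _ ≤ Qf.mul (Qf.supp a) Qf.e := Quantale'.mul_le_mul le_rfl (Qf.supp_le_e _)
    _ = Qf.supp a := Qf.mul_e _

theorem supp_eq_mul_star_of_mem_PU {v : Q} (hv : v ∈ Qf.PU) :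
    Qf.supp v = Qf.mul v (Qf.star v) := by
  refine le_antisymm (Qf.supp_le_mul_star v) ?_
  calc Qf.mul v (Qf.star v)
      ≤ Qf.mul (Qf.mul (Qf.supp v) v) (Qf.star v) :=
        Quantale'.mul_le_mul (Qf.le_supp_mul v) le_rfl
    _ = Qf.mul (Qf.supp v) (Qf.mul v (Qf.star v)) := Qf.mul_assoc _ _ _
    _ ≤ Qf.mul (Qf.supp v) Qf.e := Quantale'.mul_le_mul le_rfl hv.1
    _ = Qf.supp v := Qf.mul_e _

theorem mul_mul_star_mul_of_mem_PU {v : Q} (hv : v ∈ Qf.PU) :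
    Qf.mul v (Qf.mul (Qf.star v) v) = v := by
  rw [← Qf.mul_assoc, ← supp_eq_mul_star_of_mem_PU hv]
  refine le_antisymm ?_ (Qf.le_supp_mul v)
  calc Qf.mul (Qf.supp v) v ≤ Qf.mul Qf.e v := Quantale'.mul_le_mul (Qf.supp_le_e v) le_rfl
    _ = v := Qf.e_mul v

theorem sSup_PU_inter_Iic (q : Q) : sSup (Qf.PU ∩ Set.Iic q) = q := by
  refine le_antisymm (sSup_le fun v hv => hv.2) ?_
  calc q = q ⊓ sSup Qf.PU := by rw [show sSup Qf.PU = ⊤ from Qf.sSup_PU, inf_top_eq]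
    _ = ⨆ v ∈ Qf.PU, q ⊓ v := inf_sSup_eq
    _ ≤ sSup (Qf.PU ∩ Set.Iic q) :=
        iSup₂_le fun v hv => le_sSup ⟨Quantale'.mem_PU_of_le hv inf_le_right, inf_le_left⟩

end InverseQuantalFrame

namespace QuantaleModule

variable {Q X : Type*} [CompleteLattice Q] [CompleteLattice X] {Qs : Quantale' Q}
  (M : QuantaleModule Qs X)

def actLeft (x : X) : sSupHom Q X := sSupHom.mk' (M.act · x) (M.sSup_act · x)

def actRight (a : Q) : sSupHom X X := sSupHom.mk' (M.act a) (M.act_sSup a)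

variable {M}

theorem act_le_act {a b : Q} {x y : X} (hab : a ≤ b) (hxy : x ≤ y) : M.act a x ≤ M.act b y :=
  (OrderHomClass.mono (M.actLeft x) hab).trans (OrderHomClass.mono (M.actRight b) hxy)

end QuantaleModule

namespace PreHilbertModule

section

variable {Q X : Type*} [CompleteLattice Q] [CompleteLattice X] {Qs : Quantale' Q}
  (H : PreHilbertModule Qs X)

def innerLeft (y : X) : sSupHom X Q := sSupHom.mk' (H.inner · y) (H.sSup_inner · y)

variable {H}

theorem inner_le_inner_left {x y : X} (h : x ≤ y) (z : X) : H.inner x z ≤ H.inner y z :=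
  OrderHomClass.mono (H.innerLeft z) h

theorem inner_act_right (x : X) (a : Q) (y : X) :
    H.inner x (H.act a y) = Qs.mul (H.inner x y) (Qs.star a) := by
  rw [H.inner_star, H.inner_act, Qs.star_mul, ← H.inner_star]

theorem IsHilbertBasis.isHilbertSection {S : Set X} (hS : H.IsHilbertBasis S) {w : X}
    (hw : w ∈ S) : H.IsHilbertSection w := fun x => by
  conv_rhs => rw [hS x]
  exact le_iSup₂ (f := fun t (_ : t ∈ S) => H.act (H.inner x t) t) w hw

theorem IsHilbertBasis.inner_eq_iSup {S : Set X} (hS : H.IsHilbertBasis S) (x y : X) :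
    H.inner x y = ⨆ w ∈ S, Qs.mul (H.inner x w) (H.inner w y) := by
  conv_lhs => rw [hS x]
  simp only [← H.inner_act]
  exact map_iSup₂ (H.innerLeft y) _

end

theorem IsHilbertBasis.supp_inner_le {Q X : Type*} [Order.Frame Q] [CompleteLattice X]
    {Qf : InverseQuantalFrame Q} {H : PreHilbertModule Qf.toQuantale X} {S : Set X}
    (hS : H.IsHilbertBasis S) (x y : X) : Qf.supp (H.inner x y) ≤ H.inner x x := by
  rw [hS.inner_eq_iSup x y]
  refine (map_iSup₂ Qf.suppHom _).trans_le (iSup₂_le fun w hw => ?_)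
  calc Qf.supp (Qf.mul (H.inner x w) (H.inner w y))
      ≤ Qf.supp (H.inner x w) := InverseQuantalFrame.supp_mul_le _ _
    _ ≤ Qf.mul (H.inner x w) (Qf.star (H.inner x w)) := Qf.supp_le_mul_star _
    _ = H.inner (H.act (H.inner x w) w) x := by rw [H.inner_act, ← H.inner_star]
    _ ≤ H.inner x x := inner_le_inner_left (hS.isHilbertSection hw x) x

end PreHilbertModule

namespace QSheaf

open InverseQuantalFrame QuantaleModule PreHilbertModule

variable {Q X : Type*} [Order.Frame Q] [Order.Frame X] {Qf : InverseQuantalFrame Q}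
  {H : QSheaf Qf X}

theorem IsLocalSection.act_le_of_mem_PU {t w : X} (ht : H.IsLocalSection t)
    (hw : H.IsHilbertSection w) {v : Q} (hv : v ∈ Qf.PU) (hvwt : v ≤ H.inner w t) :
    H.act v t ≤ w := by
  obtain ⟨S, hS⟩ : ∃ S, H.IsHilbertBasis S := H.hasBasis
  have hvw : H.act (Qf.star v) w ≤ t :=
    calc H.act (Qf.star v) w ≤ H.act (H.inner t w) w :=
          act_le_act (by rw [H.inner_star t w]; exact Quantale'.star_le_star hvwt) le_rfl
      _ ≤ t := hw t
  have hvv : Qf.mul (Qf.star v) v ≤ H.sppX (H.act (Qf.star v) w) := by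
    have hsupp : Qf.mul v (Qf.star v) ≤ H.inner w w := by
      rw [← supp_eq_mul_star_of_mem_PU hv]
      exact (supp_mono hvwt).trans (hS.supp_inner_le w t)
    refine le_inf ?_ hv.2
    calc Qf.mul (Qf.star v) v = Qf.mul (Qf.star v) (Qf.mul (Qf.mul v (Qf.star v)) v) := by
          rw [Qf.mul_assoc, mul_mul_star_mul_of_mem_PU hv]
      _ ≤ Qf.mul (Qf.star v) (Qf.mul (H.inner w w) v) :=
          Quantale'.mul_le_mul le_rfl (Quantale'.mul_le_mul hsupp le_rfl)
      _ = H.inner (H.act (Qf.star v) w) (H.act (Qf.star v) w) := by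
          rw [H.inner_act, inner_act_right, Qf.star_star]
  calc H.act v t = H.act v (H.act (Qf.mul (Qf.star v) v) t) := by
        rw [← H.act_mul, mul_mul_star_mul_of_mem_PU hv]
    _ ≤ H.act v (H.act (H.sppX (H.act (Qf.star v) w)) t) :=
        act_le_act le_rfl (act_le_act hvv le_rfl)
    _ = H.act (Qf.mul v (Qf.star v)) w := by rw [ht _ hvw, H.act_mul]
    _ ≤ H.act Qf.e w := act_le_act hv.1 le_rfl
    _ = w := H.act_e w

theorem IsLocalSection.act_inner_le_of_isHilbertSection {t w : X} (ht : H.IsLocalSection t)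
    (hw : H.IsHilbertSection w) : H.act (H.inner w t) t ≤ w := by
  rw [← Qf.sSup_PU_inter_Iic (H.inner w t), H.sSup_act]
  exact iSup₂_le fun v hv => ht.act_le_of_mem_PU hw hv.1 hv.2

theorem IsLocalSection.isHilbertSection {t : X} (ht : H.IsLocalSection t) :
    H.IsHilbertSection t := fun x => by
  obtain ⟨S, hS⟩ : ∃ S, H.IsHilbertBasis S := H.hasBasis
  rw [hS.inner_eq_iSup x t]
  refine (map_iSup₂ (H.actLeft t) _).trans_le (iSup₂_le fun w hw => ?_)
  calc H.act (Qf.mul (H.inner x w) (H.inner w t)) t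
      = H.act (H.inner x w) (H.act (H.inner w t) t) := H.act_mul _ _ _
    _ ≤ H.act (H.inner x w) w :=
        act_le_act le_rfl (ht.act_inner_le_of_isHilbertSection (hS.isHilbertSection hw))
    _ ≤ x := hS.isHilbertSection hw x

theorem IsLocalSection.isPrincipalSection_and_eq_act {s t : X} {u : Q}
    (hs : H.IsLocalSection s) (ht : H.IsLocalSection t) (hu : u ∈ Qf.PU)
    (hst : H.inner s t = u) (hsu : H.sppX s = Qf.supp u) :
    H.IsPrincipalSection s ∧ s = H.act u t := by
  have hts : H.inner t s = Qf.star u := by rw [H.inner_star, hst]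
  have hs_eq : s = H.act u t := by
    refine le_antisymm ?_ (hst ▸ ht.isHilbertSection s)
    calc s = H.act (H.sppX s) s := (hs s le_rfl).symm
      _ = H.act u (H.act (Qf.star u) s) := by
          rw [hsu, supp_eq_mul_star_of_mem_PU hu, H.act_mul]
      _ ≤ H.act u t := act_le_act le_rfl (hts ▸ hs.isHilbertSection t)
  refine ⟨⟨hs, ?_⟩, hs_eq⟩
  calc H.inner s s = Qf.mul u (H.inner t s) := by
        nth_rw 1 [hs_eq]
        exact H.inner_act _ _ _
    _ = Qf.mul u (Qf.star u) := by rw [hts]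
    _ ≤ Qf.e := hu.1

end QSheaf

/-- If `s, t` are local sections and `u ∈ Q_I` with `⟨s,t⟩ = u`,
`ς_X(s) = ς_Q(u)` and `ς_X(t) = ς_Q(u*)`, then `s` and `t` are principal
sections, `s = ut` and `t = u*s`. -/
theorem stmt12 {Q X : Type*} [Order.Frame Q] [Order.Frame X]
    (Qf : InverseQuantalFrame Q) (H : QSheaf Qf X)
    (s t : X) (u : Q)
    (hs : H.IsLocalSection s) (ht : H.IsLocalSection t)
    (hu : u ∈ Qf.toQuantale.PU)
    (h1 : H.inner s t = u)
    (h2 : H.sppX s = Qf.supp u)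
    (h3 : H.sppX t = Qf.supp (Qf.star u)) :
    H.IsPrincipalSection s ∧ H.IsPrincipalSection t ∧
    s = H.act u t ∧ t = H.act (Qf.star u) s := by
  obtain ⟨hs_principal, hs_eq⟩ := hs.isPrincipalSection_and_eq_act ht hu h1 h2
  obtain ⟨ht_principal, ht_eq⟩ := ht.isPrincipalSection_and_eq_act hs
    (Quantale'.star_mem_PU hu) (by rw [H.inner_star, h1]) h3
  exact ⟨hs_principal, ht_principal, hs_eq, ht_eq⟩
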